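/- Let p_1,…,p_n : ℝ^k → ℝ be continuously differentiable and L-positively homogeneous (L > 0), let ℓ be the exponential or logistic loss, 𝓛(W) = Σ_i ℓ(p_i(W)), and let W : [0,∞) → ℝ^k be a C¹ gradient flow with dW_t/dt = −∇𝓛(W_t), 𝓛(W_0) < ℓ(0). Assume additionally: ‖W_t‖ → ∞; W_t/‖W_t‖ converges; α(W_t)/‖W_t‖^L → a for some a > 0; and ⟨W_t, −∇𝓛(W_t)⟩/(‖W_t‖·‖∇𝓛(W_t)‖) → 1. Partition the coordinates of ℝ^k into blocks, writing W_t = (U_1(t),…,U_r(t)) and denoting by ∇_{U_j}𝓛 and ∇_{U_j}α the corresponding blocks of gradients. Then s_j(t) := ‖U_j(t)‖^L/‖W_t‖^L converges to some s̄_j for every j; for every j, lim_t ‖U_j(t)‖·‖∇_{U_j}𝓛(W_t)‖/(‖W_t‖·‖∇𝓛(W_t)‖) = lim_t ⟨U_j(t), −∇_{U_j}𝓛(W_t)⟩/(‖W_t‖·‖∇𝓛(W_t)‖); and for every j with s̄_j > 0: lim_t ‖U_j(t)‖/‖W_t‖ = lim_t ‖∇_{U_j}𝓛(W_t)‖/‖∇𝓛(W_t)‖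 = s̄_j^{1/L}, lim_t ⟨U_j(t), −∇_{U_j}𝓛(W_t)⟩/(‖U_j(t)‖·‖∇_{U_j}𝓛(W_t)‖) = 1, and lim_t ⟨U_j(t), ∇_{U_j}α(W_t)⟩/‖U_j(t)‖^L = lim_t ‖∇_{U_j}α(W_t)‖/‖U_j(t)‖^{L−1} = a·L·s̄_j^{(2−L)/L}. -/

import Mathlib

open Filter

open scoped RealInnerProductSpace

/-- Euclidean norm of the block of coordinates `s` of a vector. -/
noncomputable def blockNorm {k : ℕ} (s : Finset (Fin k))
    (V : EuclideanSpace ℝ (Fin k)) : ℝ :=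
  Real.sqrt (∑ i ∈ s, V i ^ 2)

/-- Euclidean inner product of the blocks of coordinates `s` of two vectors. -/
noncomputable def blockInner {k : ℕ} (s : Finset (Fin k))
    (V U : EuclideanSpace ℝ (Fin k)) : ℝ :=
  ∑ i ∈ s, V i * U i

/-!
Since `α = ℓ⁻¹ ∘ 𝓛`, the gradient `∇α = ∇𝓛 / ℓ'(α)` is a positive multiple of `-∇𝓛`, and
Euler's identity for the `L`-homogeneous `pᵢ` gives `⟪W, ∇α(W)⟫ = L Σ ℓ'(pᵢ) pᵢ / ℓ'(α)`.
For both losses this weighted sum of the `pᵢ` lies between `α / (1 + e^{-α})` and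
`(1 + e^{-α}) (α + n)`, so `⟪W, ∇α⟫ / ‖W‖^L → a L`. As the cosine of `W` and `-∇𝓛` tends to `1`,
the direction of `-∇𝓛` converges to the limit direction `W̄` of `W`, and dividing the radial limit
by that cosine gives `‖∇α‖ / ‖W‖^(L-1) → a L`. Each block quantity is a continuous function of the
two directions and of this ratio, hence converges, with `s̄ⱼ = ‖W̄_{Pⱼ}‖^L`.
-/

open Topology Real

-- The properties of the exponential and logistic losses that the argument uses.
structure IsMarginLoss (ℓ : ℝ → ℝ) : Prop where
  neg_deriv_le : ∀ z, -deriv ℓ z ≤ ℓ z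
  le_one_add_exp_mul_neg_deriv : ∀ z, ℓ z ≤ (1 + exp (-z)) * -deriv ℓ z
  neg_deriv_le_exp : ∀ z, -deriv ℓ z ≤ exp (-z)
  exp_le_one_add_exp_mul_neg_deriv : ∀ z, exp (-z) ≤ (1 + exp (-z)) * -deriv ℓ z
  exists_continuousOn_rightInverse :
    ∃ ψ : ℝ → ℝ, ContinuousOn ψ (Set.Ioi 0) ∧ ∀ y, 0 < y → ℓ (ψ y) = y

namespace IsMarginLoss

variable {ℓ : ℝ → ℝ}

theorem neg_deriv_pos (h : IsMarginLoss ℓ) (z : ℝ) : 0 < -deriv ℓ z :=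
  pos_of_mul_pos_right ((exp_pos _).trans_le (h.exp_le_one_add_exp_mul_neg_deriv z))
    (by positivity)

theorem deriv_ne_zero (h : IsMarginLoss ℓ) (z : ℝ) : deriv ℓ z ≠ 0 :=
  neg_ne_zero.mp (h.neg_deriv_pos z).ne'

theorem pos (h : IsMarginLoss ℓ) (z : ℝ) : 0 < ℓ z :=
  (h.neg_deriv_pos z).trans_le (h.neg_deriv_le z)

theorem strictAnti (h : IsMarginLoss ℓ) : StrictAnti ℓ :=
  strictAnti_of_deriv_neg fun z => neg_pos.mp (h.neg_deriv_pos z)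

theorem hasDerivAt (h : IsMarginLoss ℓ) (z : ℝ) : HasDerivAt ℓ (deriv ℓ z) z :=
  (differentiableAt_of_deriv_ne_zero (h.deriv_ne_zero z)).hasDerivAt

theorem apply_invFun (h : IsMarginLoss ℓ) {y : ℝ} (hy : 0 < y) :
    ℓ (Function.invFun ℓ y) = y := by
  obtain ⟨ψ, -, hψ⟩ := h.exists_continuousOn_rightInverse
  exact Function.invFun_eq ⟨ψ y, hψ y hy⟩

theorem hasDerivAt_invFun (h : IsMarginLoss ℓ) {y : ℝ} (hy : 0 < y) :
    HasDerivAt (Function.invFun ℓ) (deriv ℓ (Function.invFun ℓ y))⁻¹ y := by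
  obtain ⟨ψ, hψc, hψ⟩ := h.exists_continuousOn_rightInverse
  have hψ_eq : ψ =ᶠ[𝓝 y] Function.invFun ℓ := by
    filter_upwards [Ioi_mem_nhds hy] with y' hy'
    have := Function.leftInverse_invFun h.strictAnti.injective (ψ y')
    rw [hψ y' hy'] at this
    exact this.symm
  refine .of_local_left_inverse ((hψc.continuousAt (Ioi_mem_nhds hy)).congr hψ_eq)
    (h.hasDerivAt _) (h.deriv_ne_zero _) ?_
  filter_upwards [Ioi_mem_nhds hy] with y' hy' using h.apply_invFun hy'

variable {ι : Type*} [Fintype ι] {q : ι → ℝ} {A : ℝ}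

theorem le_of_sum_eq (h : IsMarginLoss ℓ) (hsum : ∑ i, ℓ (q i) = ℓ A) (i : ι) : A ≤ q i :=
  h.strictAnti.le_iff_ge.mp <|
    hsum ▸ Finset.single_le_sum (fun j _ => (h.pos (q j)).le) (Finset.mem_univ i)

theorem div_one_add_exp_le_sum_neg_deriv_mul_div (h : IsMarginLoss ℓ) (hA : 0 ≤ A)
    (hsum : ∑ i, ℓ (q i) = ℓ A) :
    A / (1 + exp (-A)) ≤ (∑ i, -deriv ℓ (q i) * q i) / -deriv ℓ A := by
  rw [div_le_div_iff₀ (by positivity) (h.neg_deriv_pos A)]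
  have hterm (i : ι) : A * ℓ (q i) ≤ (-deriv ℓ (q i) * q i) * (1 + exp (-A)) := by
    have hqA := h.le_of_sum_eq hsum i
    have hexp : exp (-q i) ≤ exp (-A) := exp_le_exp.mpr (neg_le_neg hqA)
    calc A * ℓ (q i) ≤ A * ((1 + exp (-q i)) * -deriv ℓ (q i)) :=
          mul_le_mul_of_nonneg_left (h.le_one_add_exp_mul_neg_deriv _) hA
      _ ≤ q i * ((1 + exp (-A)) * -deriv ℓ (q i)) :=
          mul_le_mul hqA (mul_le_mul_of_nonneg_right (by linarith) (h.neg_deriv_pos _).le)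
            (mul_nonneg (by positivity) (h.neg_deriv_pos _).le) (hA.trans hqA)
      _ = _ := by ring
  calc A * -deriv ℓ A ≤ A * ℓ A := mul_le_mul_of_nonneg_left (h.neg_deriv_le A) hA
    _ = ∑ i, A * ℓ (q i) := by rw [← hsum, Finset.mul_sum]
    _ ≤ ∑ i, (-deriv ℓ (q i) * q i) * (1 + exp (-A)) := Finset.sum_le_sum fun i _ => hterm i
    _ = _ := by rw [Finset.sum_mul]

theorem sum_neg_deriv_mul_div_le (h : IsMarginLoss ℓ) (hA : 0 ≤ A)
    (hsum : ∑ i, ℓ (q i) = ℓ A) :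
    (∑ i, -deriv ℓ (q i) * q i) / -deriv ℓ A ≤ (1 + exp (-A)) * (A + Fintype.card ι) := by
  rw [div_le_iff₀ (h.neg_deriv_pos A)]
  have hterm (i : ι) : -deriv ℓ (q i) * q i ≤ A * -deriv ℓ (q i) + exp (-A) := by
    have hqA := h.le_of_sum_eq hsum i
    have hdecay : (q i - A) * exp (-q i) ≤ exp (-A) := by
      have := (mul_exp_neg_le_exp_neg_one (q i - A)).trans (exp_le_one_iff.mpr (by norm_num))
      calc (q i - A) * exp (-q i) = exp (-A) * ((q i - A) * exp (-(q i - A))) := by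
            rw [mul_left_comm, ← exp_add]; ring_nf
        _ ≤ exp (-A) := mul_le_of_le_one_right (exp_pos _).le this
    nlinarith [h.neg_deriv_le_exp (q i)]
  have hsum_le : ∑ i, -deriv ℓ (q i) ≤ (1 + exp (-A)) * -deriv ℓ A :=
    (Finset.sum_le_sum fun i _ => h.neg_deriv_le (q i)).trans
      (hsum ▸ h.le_one_add_exp_mul_neg_deriv A)
  calc ∑ i, -deriv ℓ (q i) * q i ≤ ∑ i, (A * -deriv ℓ (q i) + exp (-A)) :=
        Finset.sum_le_sum fun i _ => hterm i
    _ = A * ∑ i, -deriv ℓ (q i) + Fintype.card ι * exp (-A) := by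
        rw [Finset.sum_add_distrib, Finset.mul_sum]; simp
    _ ≤ A * ((1 + exp (-A)) * -deriv ℓ A) +
          Fintype.card ι * ((1 + exp (-A)) * -deriv ℓ A) := by
        gcongr
        exact h.exp_le_one_add_exp_mul_neg_deriv A
    _ = _ := by ring

end IsMarginLoss

theorem isMarginLoss_exp_neg : IsMarginLoss fun z => exp (-z) := by
  have hd (z : ℝ) : -deriv (fun z => exp (-z)) z = exp (-z) := by
    rw [((hasDerivAt_neg z).exp).deriv]; ring
  refine ⟨fun z => (hd z).le, fun z => ?_, fun z => (hd z).le, fun z => ?_,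
    ⟨fun y => -log y, ?_, fun y hy => by simp [exp_log hy]⟩⟩
  · rw [hd]; nlinarith [exp_pos (-z)]
  · rw [hd]; nlinarith [exp_pos (-z)]
  · exact (continuousOn_log.mono fun y hy => (Set.mem_Ioi.mp hy).ne').neg

theorem isMarginLoss_log_one_add_exp_neg : IsMarginLoss fun z => log (1 + exp (-z)) := by
  have hd (z : ℝ) :
      -deriv (fun z => log (1 + exp (-z))) z = exp (-z) / (1 + exp (-z)) := by
    rw [((((hasDerivAt_neg z).exp).const_add 1).log (by positivity)).deriv]; ring
  have hmul (z : ℝ) : (1 + exp (-z)) * (exp (-z) / (1 + exp (-z))) = exp (-z) :=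
    mul_div_cancel₀ _ (by positivity)
  refine ⟨fun z => ?_, fun z => ?_, fun z => ?_, fun z => by rw [hd, hmul],
    ⟨fun y => -log (exp y - 1), ?_, fun y hy => ?_⟩⟩
  · rw [hd]
    calc exp (-z) / (1 + exp (-z)) = 1 - (1 + exp (-z))⁻¹ := by field_simp; ring
      _ ≤ _ := one_sub_inv_le_log_of_pos (by positivity)
  · rw [hd, hmul]
    linarith [log_le_sub_one_of_pos (show 0 < 1 + exp (-z) by positivity)]
  · rw [hd]
    exact div_le_self (exp_pos _).le (by linarith [exp_pos (-z)])
  · refine (ContinuousOn.log (by fun_prop) fun y hy => ?_).neg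
    exact (sub_pos.mpr (one_lt_exp_iff.mpr hy)).ne'
  · have : 0 < exp y - 1 := sub_pos.mpr (one_lt_exp_iff.mpr hy)
    simp [exp_log this]

theorem tendsto_div_of_le_of_le_one_add_exp_neg {β : Type*} {l : Filter β} {A N F : β → ℝ}
    {a c : ℝ} (ha : 0 < a) (hN : Tendsto N l atTop) (hA : Tendsto (fun t => A t / N t) l (𝓝 a))
    (hlow : ∀ t, 0 ≤ A t → A t / (1 + exp (-A t)) ≤ F t)
    (hup : ∀ t, 0 ≤ A t → F t ≤ (1 + exp (-A t)) * (A t + c)) :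
    Tendsto (fun t => F t / N t) l (𝓝 a) := by
  have hNpos : ∀ᶠ t in l, 0 < N t := hN.eventually_gt_atTop 0
  have hAtop : Tendsto A l atTop :=
    (hA.pos_mul_atTop ha hN).congr' (hNpos.mono fun t ht => div_mul_cancel₀ _ ht.ne')
  have hexp : Tendsto (fun t => 1 + exp (-A t)) l (𝓝 1) := by
    simpa using (tendsto_exp_atBot.comp (tendsto_neg_atTop_atBot.comp hAtop)).const_add 1
  have hlow' : Tendsto (fun t => A t / N t / (1 + exp (-A t))) l (𝓝 a) := by
    have := hA.div hexp one_ne_zero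
    rwa [div_one] at this
  have hup' : Tendsto (fun t => (1 + exp (-A t)) * (A t / N t + c / N t)) l (𝓝 a) := by
    simpa using hexp.mul (hA.add (tendsto_const_nhds.div_atTop hN))
  refine tendsto_of_tendsto_of_tendsto_of_le_of_le' hlow' hup' ?_ ?_
  · filter_upwards [hNpos, hAtop.eventually_ge_atTop 0] with t hNt hAt
    rw [div_right_comm]
    exact div_le_div_of_nonneg_right (hlow t hAt) hNt.le
  · filter_upwards [hNpos, hAtop.eventually_ge_atTop 0] with t hNt hAt
    rw [← add_div, ← mul_div_assoc]
    exact div_le_div_of_nonneg_right (hup t hAt) hNt.le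

theorem HasFDerivAt.apply_self_of_homogeneous {E : Type*} [NormedAddCommGroup E]
    [NormedSpace ℝ E] {f : E → ℝ} {f' : E →L[ℝ] ℝ} {x : E} {L : ℝ} (hf : HasFDerivAt f f' x)
    (hhom : ∀ c : ℝ, 0 < c → f (c • x) = c ^ L * f x) : f' x = L * f x := by
  have hsmul : HasDerivAt (fun c : ℝ => c • x) x 1 := by
    simpa using (hasDerivAt_id (1 : ℝ)).smul_const x
  have h1 : HasDerivAt (fun c : ℝ => f (c • x)) (f' x) 1 :=
    (show HasFDerivAt f f' ((1 : ℝ) • x) by rwa [one_smul]).comp_hasDerivAt 1 hsmul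
  have h2 : HasDerivAt (fun c : ℝ => c ^ L * f x) (L * f x) 1 := by
    simpa using (hasDerivAt_rpow_const (p := L) (Or.inl one_ne_zero)).mul_const (f x)
  refine h1.unique (h2.congr_of_eventuallyEq ?_)
  filter_upwards [Ioi_mem_nhds one_pos] with c hc using hhom c hc

section Alignment

variable {F : Type*} [NormedAddCommGroup F] [InnerProductSpace ℝ F] {β : Type*} {l : Filter β}

theorem inv_norm_smul_smul_of_pos {c : ℝ} (hc : 0 < c) (x : F) :
    ‖c • x‖⁻¹ • (c • x) = ‖x‖⁻¹ • x := by
  rw [norm_smul, Real.norm_of_nonneg hc.le, smul_smul, mul_inv, mul_right_comm,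
    inv_mul_cancel₀ hc.ne', one_mul]

theorem norm_inv_norm_smul_le_one (x : F) : ‖‖x‖⁻¹ • x‖ ≤ 1 := by
  rw [norm_smul, norm_inv, norm_norm]
  exact inv_mul_le_one_of_le₀ le_rfl (norm_nonneg x)

theorem real_inner_inv_norm_smul_inv_norm_smul (x y : F) :
    ⟪‖x‖⁻¹ • x, ‖y‖⁻¹ • y⟫ = ⟪x, y⟫ / (‖x‖ * ‖y‖) := by
  rw [real_inner_smul_left, real_inner_smul_right, div_eq_mul_inv, mul_inv]
  ring

theorem tendsto_of_tendsto_of_inner_tendsto_one {u v : β → F} {x : F} (hu : ∀ t, ‖u t‖ ≤ 1)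
    (hv : ∀ t, ‖v t‖ ≤ 1) (hux : Tendsto u l (𝓝 x))
    (huv : Tendsto (fun t => ⟪u t, v t⟫) l (𝓝 1)) : Tendsto v l (𝓝 x) := by
  -- `‖u - v‖² = ‖u‖² + ‖v‖² - 2⟪u, v⟫ ≤ 2 - 2⟪u, v⟫`
  have hsq : Tendsto (fun t => ‖u t - v t‖ ^ 2) l (𝓝 0) := by
    have h2 : Tendsto (fun t => 2 - 2 * ⟪u t, v t⟫) l (𝓝 0) := by
      simpa using (huv.const_mul 2).const_sub 2
    refine squeeze_zero (fun t => sq_nonneg _) (fun t => ?_) h2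
    rw [norm_sub_sq_real]
    nlinarith [hu t, hv t, norm_nonneg (u t), norm_nonneg (v t)]
  have hdiff : Tendsto (fun t => u t - v t) l (𝓝 0) := by
    rw [tendsto_zero_iff_norm_tendsto_zero]
    simpa using hsq.sqrt
  simpa using hux.sub hdiff

theorem tendsto_inv_norm_smul_of_tendsto_inner_div {X Y : β → F} {x : F}
    (hX : Tendsto (fun t => ‖X t‖⁻¹ • X t) l (𝓝 x))
    (hXY : Tendsto (fun t => ⟪X t, Y t⟫ / (‖X t‖ * ‖Y t‖)) l (𝓝 1)) :
    Tendsto (fun t => ‖Y t‖⁻¹ • Y t) l (𝓝 x) :=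
  tendsto_of_tendsto_of_inner_tendsto_one (fun _ => norm_inv_norm_smul_le_one _)
    (fun _ => norm_inv_norm_smul_le_one _) hX
    (by simpa only [real_inner_inv_norm_smul_inv_norm_smul] using hXY)

theorem tendsto_norm_div_rpow_of_tendsto_inner {X G : β → F} {L c : ℝ}
    (hX : ∀ᶠ t in l, 0 < ‖X t‖)
    (hcos : Tendsto (fun t => ⟪X t, G t⟫ / (‖X t‖ * ‖G t‖)) l (𝓝 1))
    (hrad : Tendsto (fun t => ⟪X t, G t⟫ / ‖X t‖ ^ L) l (𝓝 c)) :
    Tendsto (fun t => ‖G t‖ / ‖X t‖ ^ (L - 1)) l (𝓝 c) := by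
  have hquot := hrad.div hcos one_ne_zero
  rw [div_one] at hquot
  refine hquot.congr' ?_
  filter_upwards [hX, hcos.eventually_ne one_ne_zero] with t hXt hct
  have hG : ‖G t‖ ≠ 0 := fun h => hct (by simp [h])
  have hi : ⟪X t, G t⟫ ≠ 0 := fun h => hct (by simp [h])
  simp only [Pi.div_apply]
  rw [Real.rpow_sub hXt, Real.rpow_one]
  field_simp

end Alignment

noncomputable def totalLoss {ι E : Type*} [Fintype ι] (ℓ : ℝ → ℝ) (p : ι → E → ℝ) (V : E) :
    ℝ :=
  ∑ i, ℓ (p i V)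

noncomputable def smoothedMargin {ι E : Type*} [Fintype ι] (ℓ : ℝ → ℝ) (p : ι → E → ℝ)
    (V : E) : ℝ :=
  Function.invFun ℓ (totalLoss ℓ p V)

section Margin

variable {ι : Type*} [Fintype ι] {ℓ : ℝ → ℝ} {L : ℝ}

theorem totalLoss_pos {E : Type*} {p : ι → E → ℝ} [Nonempty ι] (hℓ : IsMarginLoss ℓ) (V : E) :
    0 < totalLoss ℓ p V :=
  Finset.sum_pos (fun _ _ => hℓ.pos _) Finset.univ_nonempty

section NormedSpace

variable {E : Type*} [NormedAddCommGroup E] [NormedSpace ℝ E] {p : ι → E → ℝ}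

theorem hasFDerivAt_totalLoss (hℓ : IsMarginLoss ℓ) {V : E}
    (hp : ∀ i, DifferentiableAt ℝ (p i) V) :
    HasFDerivAt (totalLoss ℓ p) (∑ i, deriv ℓ (p i V) • fderiv ℝ (p i) V) V :=
  HasFDerivAt.fun_sum fun i _ => (hℓ.hasDerivAt _).comp_hasFDerivAt V (hp i).hasFDerivAt

theorem fderiv_totalLoss_apply_self (hℓ : IsMarginLoss ℓ) {V : E}
    (hp : ∀ i, DifferentiableAt ℝ (p i) V)
    (hhom : ∀ i (c : ℝ), 0 < c → p i (c • V) = c ^ L * p i V) :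
    fderiv ℝ (totalLoss ℓ p) V V = L * ∑ i, deriv ℓ (p i V) * p i V := by
  rw [(hasFDerivAt_totalLoss hℓ hp).fderiv, Finset.mul_sum]
  simp only [sum_apply, smul_apply, smul_eq_mul,
    (hp _).hasFDerivAt.apply_self_of_homogeneous (hhom _)]
  exact Finset.sum_congr rfl fun i _ => by ring

end NormedSpace

variable {E : Type*} [NormedAddCommGroup E] [InnerProductSpace ℝ E] [CompleteSpace E]
  {p : ι → E → ℝ}

theorem gradient_smoothedMargin [Nonempty ι] (hℓ : IsMarginLoss ℓ) {V : E}
    (hp : ∀ i, DifferentiableAt ℝ (p i) V) :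
    gradient (smoothedMargin ℓ p) V =
      (deriv ℓ (smoothedMargin ℓ p V))⁻¹ • gradient (totalLoss ℓ p) V := by
  refine HasGradientAt.gradient ?_
  rw [hasGradientAt_iff_hasFDerivAt, map_smul]
  exact (hℓ.hasDerivAt_invFun (totalLoss_pos hℓ V)).comp_hasFDerivAt V
    (hasFDerivAt_totalLoss hℓ hp).differentiableAt.hasGradientAt.hasFDerivAt

theorem inner_gradient_smoothedMargin [Nonempty ι] (hℓ : IsMarginLoss ℓ) {V : E}
    (hp : ∀ i, DifferentiableAt ℝ (p i) V)
    (hhom : ∀ i (c : ℝ), 0 < c → p i (c • V) = c ^ L * p i V) :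
    ⟪V, gradient (smoothedMargin ℓ p) V⟫ =
      L * ((∑ i, -deriv ℓ (p i V) * p i V) / -deriv ℓ (smoothedMargin ℓ p V)) := by
  rw [gradient_smoothedMargin hℓ hp, real_inner_smul_right, inner_gradient_right,
    fderiv_totalLoss_apply_self hℓ hp hhom]
  simp only [conj_trivial, neg_mul, Finset.sum_neg_distrib, neg_div_neg_eq]
  ring

theorem inv_norm_smul_gradient_smoothedMargin [Nonempty ι] (hℓ : IsMarginLoss ℓ) {V : E}
    (hp : ∀ i, DifferentiableAt ℝ (p i) V) :
    ‖gradient (smoothedMargin ℓ p) V‖⁻¹ • gradient (smoothedMargin ℓ p) V =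
      ‖-gradient (totalLoss ℓ p) V‖⁻¹ • -gradient (totalLoss ℓ p) V := by
  rw [gradient_smoothedMargin hℓ hp, ← neg_smul_neg (deriv ℓ _)⁻¹, ← inv_neg]
  exact inv_norm_smul_smul_of_pos (inv_pos.mpr (hℓ.neg_deriv_pos _)) _

theorem tendsto_inner_gradient_smoothedMargin_div_rpow [Nonempty ι] (hℓ : IsMarginLoss ℓ)
    (hp : ∀ i, Differentiable ℝ (p i))
    (hhom : ∀ i (c : ℝ), 0 < c → ∀ V, p i (c • V) = c ^ L * p i V) (hL : 0 < L)
    {β : Type*} {l : Filter β} {X : β → E} {a : ℝ} (ha : 0 < a)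
    (hX : Tendsto (fun t => ‖X t‖) l atTop)
    (hα : Tendsto (fun t => smoothedMargin ℓ p (X t) / ‖X t‖ ^ L) l (𝓝 a)) :
    Tendsto (fun t => ⟪X t, gradient (smoothedMargin ℓ p) (X t)⟫ / ‖X t‖ ^ L) l
      (𝓝 (a * L)) := by
  have hsum (V : E) : ∑ i, ℓ (p i V) = ℓ (smoothedMargin ℓ p V) :=
    (hℓ.apply_invFun (totalLoss_pos hℓ V)).symm
  have hlim := tendsto_div_of_le_of_le_one_add_exp_neg ha ((tendsto_rpow_atTop hL).comp hX) hα
    (fun t ht => hℓ.div_one_add_exp_le_sum_neg_deriv_mul_div ht (hsum (X t)))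
    (fun t ht => hℓ.sum_neg_deriv_mul_div_le ht (hsum (X t)))
  rw [mul_comm a L]
  refine (hlim.const_mul L).congr fun t => ?_
  rw [inner_gradient_smoothedMargin hℓ (fun i => hp i _) fun i c hc => hhom i c hc _]
  simp only [Function.comp_apply]
  ring

theorem tendsto_norm_gradient_smoothedMargin_div_rpow [Nonempty ι] (hℓ : IsMarginLoss ℓ)
    (hp : ∀ i, Differentiable ℝ (p i))
    (hhom : ∀ i (c : ℝ), 0 < c → ∀ V, p i (c • V) = c ^ L * p i V) (hL : 0 < L)
    {β : Type*} {l : Filter β} {X : β → E} {a : ℝ} (ha : 0 < a)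
    (hX : Tendsto (fun t => ‖X t‖) l atTop)
    (hα : Tendsto (fun t => smoothedMargin ℓ p (X t) / ‖X t‖ ^ L) l (𝓝 a))
    (hcos : Tendsto (fun t => ⟪X t, -gradient (totalLoss ℓ p) (X t)⟫ /
      (‖X t‖ * ‖-gradient (totalLoss ℓ p) (X t)‖)) l (𝓝 1)) :
    Tendsto (fun t => ‖gradient (smoothedMargin ℓ p) (X t)‖ / ‖X t‖ ^ (L - 1)) l
      (𝓝 (a * L)) := by
  refine tendsto_norm_div_rpow_of_tendsto_inner (hX.eventually_gt_atTop 0) ?_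
    (tendsto_inner_gradient_smoothedMargin_div_rpow hℓ hp hhom hL ha hX hα)
  simpa only [← real_inner_inv_norm_smul_inv_norm_smul,
    inv_norm_smul_gradient_smoothedMargin hℓ fun i => (hp i).differentiableAt] using hcos

end Margin

section Blocks

variable {k : ℕ} (s : Finset (Fin k))

theorem blockNorm_nonneg (V : EuclideanSpace ℝ (Fin k)) : 0 ≤ blockNorm s V :=
  Real.sqrt_nonneg _

theorem blockNorm_smul (c : ℝ) (V : EuclideanSpace ℝ (Fin k)) :
    blockNorm s (c • V) = |c| * blockNorm s V := by
  simp only [blockNorm, PiLp.smul_apply, smul_eq_mul, mul_pow, ← Finset.mul_sum]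
  rw [Real.sqrt_mul (sq_nonneg c), Real.sqrt_sq_eq_abs]

theorem blockNorm_neg (V : EuclideanSpace ℝ (Fin k)) : blockNorm s (-V) = blockNorm s V := by
  simp [blockNorm]

theorem blockInner_self (V : EuclideanSpace ℝ (Fin k)) :
    blockInner s V V = blockNorm s V ^ 2 := by
  rw [blockNorm, Real.sq_sqrt (Finset.sum_nonneg fun i _ => sq_nonneg _), blockInner]
  simp only [sq]

theorem blockInner_smul_smul (c d : ℝ) (V U : EuclideanSpace ℝ (Fin k)) :
    blockInner s (c • V) (d • U) = c * d * blockInner s V U := by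
  simp only [blockInner, PiLp.smul_apply, smul_eq_mul, Finset.mul_sum]
  exact Finset.sum_congr rfl fun i _ => by ring

theorem continuous_blockNorm : Continuous (blockNorm s) := by
  unfold blockNorm
  fun_prop

theorem continuous_blockInner :
    Continuous fun VU : EuclideanSpace ℝ (Fin k) × EuclideanSpace ℝ (Fin k) =>
      blockInner s VU.1 VU.2 := by
  unfold blockInner
  fun_prop

theorem blockNorm_inv_norm_smul (V : EuclideanSpace ℝ (Fin k)) :
    blockNorm s (‖V‖⁻¹ • V) = blockNorm s V / ‖V‖ := by
  rw [blockNorm_smul, abs_inv, abs_norm, inv_mul_eq_div]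

theorem blockInner_inv_norm_smul_inv_norm_smul (V U : EuclideanSpace ℝ (Fin k)) :
    blockInner s (‖V‖⁻¹ • V) (‖U‖⁻¹ • U) = blockInner s V U / (‖V‖ * ‖U‖) := by
  rw [blockInner_smul_smul, div_eq_inv_mul, mul_inv]

end Blocks

section BlockLimits

variable {k : ℕ} (s : Finset (Fin k)) {β : Type*} {l : Filter β}
  {X Y : β → EuclideanSpace ℝ (Fin k)} {x : EuclideanSpace ℝ (Fin k)}

theorem tendsto_blockNorm_div_norm (hX : Tendsto (fun t => ‖X t‖⁻¹ • X t) l (𝓝 x)) :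
    Tendsto (fun t => blockNorm s (X t) / ‖X t‖) l (𝓝 (blockNorm s x)) :=
  (((continuous_blockNorm s).tendsto x).comp hX).congr fun t => blockNorm_inv_norm_smul s (X t)

theorem tendsto_blockInner_div_norm_mul_norm (hX : Tendsto (fun t => ‖X t‖⁻¹ • X t) l (𝓝 x))
    (hY : Tendsto (fun t => ‖Y t‖⁻¹ • Y t) l (𝓝 x)) :
    Tendsto (fun t => blockInner s (X t) (Y t) / (‖X t‖ * ‖Y t‖)) l (𝓝 (blockNorm s x ^ 2)) := by
  rw [← blockInner_self]
  exact (((continuous_blockInner s).tendsto (x, x)).comp (hX.prodMk_nhds hY)).congr fun t =>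
    blockInner_inv_norm_smul_inv_norm_smul s (X t) (Y t)

theorem eventually_pos_of_blockNorm_pos (hX : Tendsto (fun t => ‖X t‖⁻¹ • X t) l (𝓝 x))
    (hx : 0 < blockNorm s x) : ∀ᶠ t in l, 0 < ‖X t‖ ∧ 0 < blockNorm s (X t) := by
  filter_upwards [(tendsto_blockNorm_div_norm s hX).eventually (lt_mem_nhds hx)] with t ht
  rcases div_pos_iff.mp ht with h | h
  · exact ⟨h.2, h.1⟩
  · exact absurd h.2 (norm_nonneg _).not_gt

theorem tendsto_blockInner_div_blockNorm_mul_blockNorm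
    (hX : Tendsto (fun t => ‖X t‖⁻¹ • X t) l (𝓝 x)) (hY : Tendsto (fun t => ‖Y t‖⁻¹ • Y t) l (𝓝 x))
    (hx : 0 < blockNorm s x) :
    Tendsto (fun t => blockInner s (X t) (Y t) / (blockNorm s (X t) * blockNorm s (Y t))) l
      (𝓝 1) := by
  have hlim := (tendsto_blockInner_div_norm_mul_norm s hX hY).div
    ((tendsto_blockNorm_div_norm s hX).mul (tendsto_blockNorm_div_norm s hY)) (by positivity)
  rw [← sq, div_self (by positivity)] at hlim
  refine hlim.congr' ?_
  filter_upwards [eventually_pos_of_blockNorm_pos s hX hx, eventually_pos_of_blockNorm_pos s hY hx]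
    with t hXt hYt
  simp only [Pi.div_apply]
  rw [div_mul_div_comm, div_div_div_cancel_right₀ (mul_pos hXt.1 hYt.1).ne']

variable {L c : ℝ}

theorem tendsto_blockInner_div_blockNorm_rpow (hX : Tendsto (fun t => ‖X t‖⁻¹ • X t) l (𝓝 x))
    (hY : Tendsto (fun t => ‖Y t‖⁻¹ • Y t) l (𝓝 x)) (hx : 0 < blockNorm s x)
    (hYX : Tendsto (fun t => ‖Y t‖ / ‖X t‖ ^ (L - 1)) l (𝓝 c)) :
    Tendsto (fun t => blockInner s (X t) (Y t) / blockNorm s (X t) ^ L) l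
      (𝓝 (c * blockNorm s x ^ (2 - L))) := by
  have hlim := ((tendsto_blockInner_div_norm_mul_norm s hX hY).mul hYX).div
    ((tendsto_blockNorm_div_norm s hX).rpow_const (p := L) (Or.inl hx.ne')) (by positivity)
  rw [show blockNorm s x ^ 2 * c / blockNorm s x ^ L = c * blockNorm s x ^ (2 - L) by
    rw [Real.rpow_sub hx, Real.rpow_two]; ring] at hlim
  refine hlim.congr' ?_
  filter_upwards [eventually_pos_of_blockNorm_pos s hX hx, eventually_pos_of_blockNorm_pos s hY hx]
    with t hXt hYt
  have := (Real.rpow_pos_of_pos hXt.1 L).ne'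
  simp only [Pi.div_apply]
  rw [Real.div_rpow (blockNorm_nonneg _ _) hXt.1.le, Real.rpow_sub_one hXt.1.ne']
  field_simp [hXt.1.ne', hYt.1.ne']

theorem tendsto_blockNorm_div_blockNorm_rpow (hX : Tendsto (fun t => ‖X t‖⁻¹ • X t) l (𝓝 x))
    (hY : Tendsto (fun t => ‖Y t‖⁻¹ • Y t) l (𝓝 x)) (hx : 0 < blockNorm s x)
    (hYX : Tendsto (fun t => ‖Y t‖ / ‖X t‖ ^ (L - 1)) l (𝓝 c)) :
    Tendsto (fun t => blockNorm s (Y t) / blockNorm s (X t) ^ (L - 1)) l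
      (𝓝 (c * blockNorm s x ^ (2 - L))) := by
  have hlim := ((tendsto_blockNorm_div_norm s hY).mul hYX).div
    ((tendsto_blockNorm_div_norm s hX).rpow_const (p := L - 1) (Or.inl hx.ne')) (by positivity)
  rw [show blockNorm s x * c / blockNorm s x ^ (L - 1) = c * blockNorm s x ^ (2 - L) by
    rw [show 2 - L = 1 - (L - 1) by ring, Real.rpow_sub hx 1 (L - 1), Real.rpow_one]; ring] at hlim
  refine hlim.congr' ?_
  filter_upwards [eventually_pos_of_blockNorm_pos s hX hx, eventually_pos_of_blockNorm_pos s hY hx]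
    with t hXt hYt
  have := (Real.rpow_pos_of_pos hXt.1 (L - 1)).ne'
  simp only [Pi.div_apply]
  rw [Real.div_rpow (blockNorm_nonneg _ _) hXt.1.le]
  field_simp [hXt.1.ne', hYt.1.ne']

end BlockLimits

theorem statement_15_general
    (n k : ℕ) (hn : 0 < n) (L : ℝ) (hL : 0 < L)
    (p : Fin n → EuclideanSpace ℝ (Fin k) → ℝ)
    (hp : ∀ i, ContDiff ℝ 1 (p i))
    (hhom : ∀ i (c : ℝ), 0 < c → ∀ V, p i (c • V) = c ^ L * p i V)
    (ℓ : ℝ → ℝ)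
    (hℓ : ℓ = (fun z => Real.exp (-z)) ∨ ℓ = fun z => Real.log (1 + Real.exp (-z)))
    (𝓛 : EuclideanSpace ℝ (Fin k) → ℝ)
    (h𝓛 : 𝓛 = fun V => ∑ i, ℓ (p i V))
    (α : EuclideanSpace ℝ (Fin k) → ℝ)
    (hα : α = fun V => Function.invFun ℓ (𝓛 V))
    (W : ℝ → EuclideanSpace ℝ (Fin k))
    (hWnorm : Tendsto (fun t => ‖W t‖) atTop atTop)
    (hdir : ∃ Wbar, Tendsto (fun t => ‖W t‖⁻¹ • W t) atTop (nhds Wbar))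
    (a : ℝ) (ha : 0 < a)
    (halpha : Tendsto (fun t => α (W t) / ‖W t‖ ^ L) atTop (nhds a))
    (halign : Tendsto
      (fun t => ⟪W t, -gradient 𝓛 (W t)⟫ / (‖W t‖ * ‖gradient 𝓛 (W t)‖))
      atTop (nhds 1))
    -- a partition of the coordinates into blocks
    (r : ℕ) (P : Fin r → Finset (Fin k)) :
    ∃ sbar : Fin r → ℝ,
      (∀ j, Tendsto (fun t => blockNorm (P j) (W t) ^ L / ‖W t‖ ^ L)
        atTop (nhds (sbar j))) ∧
      (∀ j, ∃ c : ℝ,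
        Tendsto (fun t => blockNorm (P j) (W t) * blockNorm (P j) (gradient 𝓛 (W t)) /
          (‖W t‖ * ‖gradient 𝓛 (W t)‖)) atTop (nhds c) ∧
        Tendsto (fun t => blockInner (P j) (W t) (-gradient 𝓛 (W t)) /
          (‖W t‖ * ‖gradient 𝓛 (W t)‖)) atTop (nhds c)) ∧
      ∀ j, 0 < sbar j →
        Tendsto (fun t => blockNorm (P j) (W t) / ‖W t‖)
          atTop (nhds (sbar j ^ (1 / L))) ∧
        Tendsto (fun t => blockNorm (P j) (gradient 𝓛 (W t)) / ‖gradient 𝓛 (W t)‖)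
          atTop (nhds (sbar j ^ (1 / L))) ∧
        Tendsto (fun t => blockInner (P j) (W t) (-gradient 𝓛 (W t)) /
            (blockNorm (P j) (W t) * blockNorm (P j) (gradient 𝓛 (W t))))
          atTop (nhds 1) ∧
        Tendsto (fun t => blockInner (P j) (W t) (gradient α (W t)) /
            blockNorm (P j) (W t) ^ L)
          atTop (nhds (a * L * sbar j ^ ((2 - L) / L))) ∧
        Tendsto (fun t => blockNorm (P j) (gradient α (W t)) /
            blockNorm (P j) (W t) ^ (L - 1))
          atTop (nhds (a * L * sbar j ^ ((2 - L) / L))) := by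
  obtain rfl : 𝓛 = totalLoss ℓ p := h𝓛
  obtain rfl : α = smoothedMargin ℓ p := hα
  have : Nonempty (Fin n) := Fin.pos_iff_nonempty.mp hn
  have hloss : IsMarginLoss ℓ := by
    rcases hℓ with rfl | rfl
    exacts [isMarginLoss_exp_neg, isMarginLoss_log_one_add_exp_neg]
  have hpd (i : Fin n) : Differentiable ℝ (p i) := (hp i).differentiable one_ne_zero
  obtain ⟨Wbar, hWdir⟩ := hdir
  have hYcos : Tendsto (fun t => ⟪W t, -gradient (totalLoss ℓ p) (W t)⟫ /
      (‖W t‖ * ‖-gradient (totalLoss ℓ p) (W t)‖)) atTop (𝓝 1) := by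
    simpa only [norm_neg] using halign
  have hYdir := tendsto_inv_norm_smul_of_tendsto_inner_div hWdir hYcos
  have hGdir : Tendsto (fun t => ‖gradient (smoothedMargin ℓ p) (W t)‖⁻¹ •
      gradient (smoothedMargin ℓ p) (W t)) atTop (𝓝 Wbar) := by
    simpa only [inv_norm_smul_gradient_smoothedMargin hloss fun i => (hpd i).differentiableAt]
      using hYdir
  have hGnorm := tendsto_norm_gradient_smoothedMargin_div_rpow hloss hpd hhom hL ha hWnorm
    halpha hYcos
  refine ⟨fun j => blockNorm (P j) Wbar ^ L, fun j => ?_,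
    fun j => ⟨blockNorm (P j) Wbar ^ 2, ?_, ?_⟩, fun j hj => ?_⟩
  · exact ((tendsto_blockNorm_div_norm (P j) hWdir).rpow_const (Or.inr hL.le)).congr fun t =>
      Real.div_rpow (blockNorm_nonneg _ _) (norm_nonneg _) L
  · simpa only [div_mul_div_comm, blockNorm_neg, norm_neg, sq] using
      (tendsto_blockNorm_div_norm (P j) hWdir).mul (tendsto_blockNorm_div_norm (P j) hYdir)
  · simpa only [norm_neg] using tendsto_blockInner_div_norm_mul_norm (P j) hWdir hYdir
  · have hb : 0 < blockNorm (P j) Wbar := (blockNorm_nonneg _ _).lt_of_ne fun h => by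
      simp [← h, Real.zero_rpow hL.ne'] at hj
    rw [one_div, Real.rpow_rpow_inv hb.le hL.ne', ← Real.rpow_mul hb.le, mul_div_cancel₀ _ hL.ne']
    refine ⟨tendsto_blockNorm_div_norm (P j) hWdir, ?_, ?_,
      tendsto_blockInner_div_blockNorm_rpow (P j) hWdir hGdir hb hGnorm,
      tendsto_blockNorm_div_blockNorm_rpow (P j) hWdir hGdir hb hGnorm⟩
    · simpa only [blockNorm_neg, norm_neg] using tendsto_blockNorm_div_norm (P j) hYdir
    · simpa only [blockNorm_neg] using
        tendsto_blockInner_div_blockNorm_mul_blockNorm (P j) hWdir hYdir hb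

theorem statement_15
    (n k : ℕ) (hn : 0 < n) (L : ℝ) (hL : 0 < L)
    (p : Fin n → EuclideanSpace ℝ (Fin k) → ℝ)
    (hp : ∀ i, ContDiff ℝ 1 (p i))
    (hhom : ∀ i (c : ℝ), 0 < c → ∀ V, p i (c • V) = c ^ L * p i V)
    (ℓ : ℝ → ℝ)
    (hℓ : ℓ = (fun z => Real.exp (-z)) ∨ ℓ = fun z => Real.log (1 + Real.exp (-z)))
    (𝓛 : EuclideanSpace ℝ (Fin k) → ℝ)
    (h𝓛 : 𝓛 = fun V => ∑ i, ℓ (p i V))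
    (α : EuclideanSpace ℝ (Fin k) → ℝ)
    (hα : α = fun V => Function.invFun ℓ (𝓛 V))
    (W : ℝ → EuclideanSpace ℝ (Fin k))
    (hW : ∀ t : ℝ, 0 ≤ t → HasDerivAt W (-gradient 𝓛 (W t)) t)
    (hinit : 𝓛 (W 0) < ℓ 0)
    (hWnorm : Tendsto (fun t => ‖W t‖) atTop atTop)
    (hdir : ∃ Wbar, Tendsto (fun t => ‖W t‖⁻¹ • W t) atTop (nhds Wbar))
    (a : ℝ) (ha : 0 < a)
    (halpha : Tendsto (fun t => α (W t) / ‖W t‖ ^ L) atTop (nhds a))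
    (halign : Tendsto
      (fun t => ⟪W t, -gradient 𝓛 (W t)⟫ / (‖W t‖ * ‖gradient 𝓛 (W t)‖))
      atTop (nhds 1))
    -- a partition of the coordinates into blocks
    (r : ℕ) (P : Fin r → Finset (Fin k))
    (hPdisj : ∀ j j' : Fin r, j ≠ j' → Disjoint (P j) (P j'))
    (hPcover : ∀ i : Fin k, ∃ j, i ∈ P j) :
    ∃ sbar : Fin r → ℝ,
      (∀ j, Tendsto (fun t => blockNorm (P j) (W t) ^ L / ‖W t‖ ^ L)
        atTop (nhds (sbar j))) ∧
      (∀ j, ∃ c : ℝ,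
        Tendsto (fun t => blockNorm (P j) (W t) * blockNorm (P j) (gradient 𝓛 (W t)) /
          (‖W t‖ * ‖gradient 𝓛 (W t)‖)) atTop (nhds c) ∧
        Tendsto (fun t => blockInner (P j) (W t) (-gradient 𝓛 (W t)) /
          (‖W t‖ * ‖gradient 𝓛 (W t)‖)) atTop (nhds c)) ∧
      ∀ j, 0 < sbar j →
        Tendsto (fun t => blockNorm (P j) (W t) / ‖W t‖)
          atTop (nhds (sbar j ^ (1 / L))) ∧
        Tendsto (fun t => blockNorm (P j) (gradient 𝓛 (W t)) / ‖gradient 𝓛 (W t)‖)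
          atTop (nhds (sbar j ^ (1 / L))) ∧
        Tendsto (fun t => blockInner (P j) (W t) (-gradient 𝓛 (W t)) /
            (blockNorm (P j) (W t) * blockNorm (P j) (gradient 𝓛 (W t))))
          atTop (nhds 1) ∧
        Tendsto (fun t => blockInner (P j) (W t) (gradient α (W t)) /
            blockNorm (P j) (W t) ^ L)
          atTop (nhds (a * L * sbar j ^ ((2 - L) / L))) ∧
        Tendsto (fun t => blockNorm (P j) (gradient α (W t)) /
            blockNorm (P j) (W t) ^ (L - 1))
          atTop (nhds (a * L * sbar j ^ ((2 - L) / L))) :=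
  statement_15_general n k hn L hL p hp hhom ℓ hℓ 𝓛 h𝓛 α hα W hWnorm hdir a ha halpha halign r P
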